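/- arXiv:2109.04725 — 2 statements merged into one kernel-verified Lean document; each statement's English description precedes it below -/
import Mathlib

section
/- Let G be a group, p a prime, and a, d ∈ G with a^p = 1. Suppose that the conjugates d^{a^i} for 0 ≤ i ≤ p-1 pairwise commute, that each has order exactly p, and that the product d^{a^{p-1}} · d^{a^{p-2}} · ... · d^{a} · d is nontrivial. Then the element ad has order exactly p^2. -/
lemma aux_prod_pow {G : Type*} [Group G] (p : ℕ) :
    ∀ (l : List G), (∀ x ∈ l, x ^ p = 1) → (∀ x ∈ l, ∀ y ∈ l, Commute x y) →
      l.prod ^ p = 1 := by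
  intro l
  induction l with
  | nil => simp
  | cons x t ih =>
    intro h1 h2
    have hc : Commute x t.prod :=
      Commute.list_prod_right _ _ (fun y hy => h2 x (by simp) y (by simp [hy]))
    rw [List.prod_cons, hc.mul_pow, h1 x (by simp),
      ih (fun y hy => h1 y (by simp [hy]))
        (fun y hy z hz => h2 y (by simp [hy]) z (by simp [hz])), one_mul]

lemma aux_pow_ad {G : Type*} [Group G] (a d : G) (n : ℕ) :
    (a * d) ^ n =
      a ^ n * ((List.range n).reverse.map (fun i => (a ^ i)⁻¹ * d * a ^ i)).prod := by
  induction n with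
  | zero => simp
  | succ n ih =>
    rw [pow_succ' (a * d), ih, List.range_succ, List.reverse_append]
    simp only [List.reverse_cons, List.reverse_nil, List.nil_append, List.cons_append,
      List.map_cons, List.prod_cons, List.singleton_append]
    rw [pow_succ']
    simp [mul_assoc, mul_inv_cancel_left]

theorem stmt_1 {G : Type*} [Group G] (p : ℕ) (hp : p.Prime) (a d : G)
    (ha : a ^ p = 1)
    (hcomm : ∀ i j, i < p → j < p →
      Commute ((a ^ i)⁻¹ * d * a ^ i) ((a ^ j)⁻¹ * d * a ^ j))
    (hord : ∀ i, i < p → orderOf ((a ^ i)⁻¹ * d * a ^ i) = p)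
    (hprod : ((List.range p).reverse.map (fun i => (a ^ i)⁻¹ * d * a ^ i)).prod ≠ 1) :
    orderOf (a * d) = p ^ 2 := by
  set P := ((List.range p).reverse.map (fun i => (a ^ i)⁻¹ * d * a ^ i)).prod with hP
  have hadp : (a * d) ^ p = P := by rw [aux_pow_ad, ha, one_mul]
  have hmem : ∀ x ∈ (List.range p).reverse.map (fun i => (a ^ i)⁻¹ * d * a ^ i),
      ∃ i, i < p ∧ x = (a ^ i)⁻¹ * d * a ^ i := by
    intro x hx
    simp only [List.mem_map, List.mem_reverse, List.mem_range] at hx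
    obtain ⟨i, hi, rfl⟩ := hx
    exact ⟨i, hi, rfl⟩
  have hPp : P ^ p = 1 := by
    apply aux_prod_pow
    · intro x hx
      obtain ⟨i, hi, rfl⟩ := hmem x hx
      rw [← hord i hi]; exact pow_orderOf_eq_one _
    · intro x hx y hy
      obtain ⟨i, hi, rfl⟩ := hmem x hx
      obtain ⟨j, hj, rfl⟩ := hmem y hy
      exact hcomm i j hi hj
  have h2 : (a * d) ^ (p ^ 2) = 1 := by
    rw [sq, pow_mul, hadp, hPp]
  have hdvd : orderOf (a * d) ∣ p ^ 2 := orderOf_dvd_of_pow_eq_one h2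
  obtain ⟨k, hk, hko⟩ := (Nat.dvd_prime_pow hp).mp hdvd
  interval_cases k
  · exfalso
    rw [pow_zero, orderOf_eq_one_iff] at hko
    apply hprod
    rw [← hadp, hko, one_pow]
  · exfalso
    apply hprod
    rw [← hadp]
    rw [pow_one] at hko
    rw [← hko]; exact pow_orderOf_eq_one _
  · exact hko
end

section
/- Let Γ = ⟨x, y₁, ..., y_{n-1}⟩ be a finite p-group generated by n elements (n ≥ 2, p prime), and suppose the abelianisation Γ/Γ' decomposes as the internal direct product ⟨xΓ'⟩ × ⟨y₁Γ'⟩ × ... × ⟨y_{n-1}Γ'⟩. If the order of x equals the order of xΓ' in Γ/Γ', then for every i ∈ {1, ..., n-1}, the union over g ∈ Γ of the conjugates ⟨x⟩^g intersects the union over g ∈ Γ of the conjugates ⟨y_i⟩^g trivially: the intersection is {1}. -/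
theorem stmt_4 {Γ : Type*} [Group Γ] [Fintype Γ] (p : ℕ) (hp : p.Prime)
    (hP : IsPGroup p Γ) (n : ℕ) (z : Fin (n + 2) → Γ)
    (hgen : Subgroup.closure (Set.range z) = ⊤)
    (hindep : iSupIndep
      (fun i : Fin (n + 2) => Subgroup.zpowers (Abelianization.of (z i))))
    (hsup : (⨆ i : Fin (n + 2), Subgroup.zpowers (Abelianization.of (z i))) = ⊤)
    (hord : orderOf (z 0) = orderOf (Abelianization.of (z 0))) :
    ∀ i : Fin (n + 2), i ≠ 0 →
      (⋃ g : Γ, ((Subgroup.zpowers (z 0)).map (MulAut.conj g⁻¹).toMonoidHom : Set Γ)) ∩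
        (⋃ g : Γ, ((Subgroup.zpowers (z i)).map (MulAut.conj g⁻¹).toMonoidHom : Set Γ)) =
      {1} := by
  intro i hi
  have hdisj : Disjoint (Subgroup.zpowers (Abelianization.of (z 0)))
      (Subgroup.zpowers (Abelianization.of (z i))) :=
    hindep.pairwiseDisjoint (Ne.symm hi)
  ext w
  simp only [Set.mem_inter_iff, Set.mem_iUnion, Set.mem_singleton_iff, SetLike.mem_coe,
    Subgroup.mem_map, Subgroup.mem_zpowers_iff]
  constructor
  · rintro ⟨⟨g, u, ⟨a, rfl⟩, rfl⟩, ⟨h, v, ⟨b, hb⟩, hvw⟩⟩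
    have conj_eq : ∀ (g x : Γ),
        Abelianization.of ((MulAut.conj g⁻¹).toMonoidHom x) = Abelianization.of x := by
      intro g x
      simp [MulAut.conj_apply, map_mul, mul_comm, mul_assoc, mul_left_comm]
    have key : Abelianization.of (z 0) ^ a = Abelianization.of (z i) ^ b := by
      have := congrArg Abelianization.of hvw
      rw [conj_eq, conj_eq, ← hb, map_zpow, map_zpow] at this
      exact this.symm
    have h0 : Abelianization.of (z 0) ^ a = 1 := by
      refine hdisj.le_bot ⟨⟨a, rfl⟩, ⟨b, key.symm⟩⟩
    have hdvd : (orderOf (z 0) : ℤ) ∣ a := by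
      rw [hord]; exact orderOf_dvd_iff_zpow_eq_one.mpr h0
    have hz : z 0 ^ a = 1 := orderOf_dvd_iff_zpow_eq_one.mp hdvd
    simp [hz]
  · rintro rfl
    exact ⟨⟨1, 1, ⟨0, by simp⟩, by simp⟩, ⟨1, 1, ⟨0, by simp⟩, by simp⟩⟩
end
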